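/- Let A be a strongly-fibred attractor of the IFS F with basin B(A), let x_0 ∈ B(A), and let (Z_n)_{n≥1} be a disjunctive stochastic process with values in Σ. Then with probability 1 the random chaos game orbit x_k = f_{Z_k}(x_{k-1}) satisfies: the tails {x_n : n ≥ p} converge to A in the Hausdorff metric as p → ∞, and A = ⋂_{p≥1} closure({x_n : n ≥ p}). -/

import Mathlib

/-!
The orbit point `x_k` lies in `F^k({x₀})`, which converges to `A` because `x₀` is in the basin;
hence the orbit approaches `A`, and every limit point of the orbit lies in `A`.

Conversely, let `a ∈ A` and let `V` be an open set containing `a`. Strong fibredness gives a fibre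
`A_ρ ⊆ V`. Since `A` is `F`-invariant, the compact sets `f_{ρ_1} ∘ ⋯ ∘ f_{ρ_K}(A)` decrease to
`A_ρ`, so one finite composition already maps `A`, and hence a neighbourhood `W` of `A`, into `V`.
Once the orbit has entered `W` for good, a disjunctive sequence eventually applies exactly this
composition, which puts an orbit point in `V`. So `A` lies in every tail closure, and the tails
converge to `A`.

There are only countably many words, so a disjunctive process is almost surely a disjunctive
sequence.
-/

open Metric Filter Set MeasureTheory

variable {X : Type*} [MetricSpace X] [CompleteSpace X]
variable {Λ : Type*} [Fintype Λ] [Nonempty Λ]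

/-- The Hutchinson operator of the IFS given by the maps `f a`, `a : Λ`. -/
def Hutch (f : Λ → X → X) (B : Set X) : Set X := ⋃ a : Λ, f a '' B

/-- `A` attracts, under iteration of the Hutchinson operator, every nonempty
compact subset of `U`, in the Hausdorff metric. -/
def Attracts (f : Λ → X → X) (A U : Set X) : Prop :=
  ∀ B : Set X, B.Nonempty → IsCompact B → B ⊆ U →
    Tendsto (fun k : ℕ => hausdorffDist ((Hutch f)^[k] B) A) atTop (nhds 0)

/-- `A` is an attractor of the IFS `f`: a nonempty compact set admitting an open
neighbourhood `U ⊇ A` all of whose nonempty compact subsets are attracted to `A`. -/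
def IsAttractor (f : Λ → X → X) (A : Set X) : Prop :=
  A.Nonempty ∧ IsCompact A ∧ ∃ U : Set X, IsOpen U ∧ A ⊆ U ∧ Attracts f A U

/-- The basin of the attractor `A`: the union of all open `U ⊇ A` from which `A` attracts. -/
def basin (f : Λ → X → X) (A : Set X) : Set X :=
  ⋃₀ {U : Set X | IsOpen U ∧ A ⊆ U ∧ Attracts f A U}

/-- The chaos game orbit of `x₀` driven by the sequence `σ` (0-indexed: `σ 0` acts first). -/
def orbit (f : Λ → X → X) (σ : ℕ → Λ) (x₀ : X) : ℕ → X
  | 0 => x₀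
  | k + 1 => f (σ k) (orbit f σ x₀ k)

/-- `C_K(x₀,σ)`: the closure of the tail `{x_k : k ≥ K}` of the chaos game orbit. -/
def tailSet (f : Λ → X → X) (σ : ℕ → Λ) (x₀ : X) (K : ℕ) : Set X :=
  closure {y : X | ∃ k : ℕ, K ≤ k ∧ orbit f σ x₀ k = y}

/-- `C_∞(x₀,σ) = ⋂_K C_K(x₀,σ)`. -/
def Cinf (f : Λ → X → X) (σ : ℕ → Λ) (x₀ : X) : Set X :=
  ⋂ K : ℕ, tailSet f σ x₀ K

/-- For a word `w = (σ₁, …, σ_m)`, `wordApply f w = f_{σ_m} ∘ ⋯ ∘ f_{σ_1}`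
(the letter `w 0` acts first). -/
def wordApply (f : Λ → X → X) {m : ℕ} (w : Fin m → Λ) (x : X) : X :=
  (List.ofFn w).foldl (fun y a => f a y) x

/-- A sequence of symbols is disjunctive if it contains every finite word
as a block of consecutive letters. -/
def Disjunctive {Γ : Type*} (σ : ℕ → Γ) : Prop :=
  ∀ (m : ℕ) (w : Fin m → Γ), ∃ j : ℕ, ∀ l : Fin m, σ (j + l.1) = w l

/-- `fibreComp f ρ K = f_{ρ_1} ∘ f_{ρ_2} ∘ ⋯ ∘ f_{ρ_K}` (0-indexed: `f (ρ 0) ∘ ⋯ ∘ f (ρ (K-1))`). -/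
def fibreComp (f : Λ → X → X) (ρ : ℕ → Λ) : ℕ → X → X
  | 0 => id
  | K + 1 => fibreComp f ρ K ∘ f (ρ K)

/-- The fibre `A_ρ = ⋂_{K ≥ 1} f_{ρ_1} ∘ ⋯ ∘ f_{ρ_K}(A)` of the attractor `A`. -/
def fibre (f : Λ → X → X) (A : Set X) (ρ : ℕ → Λ) : Set X :=
  ⋂ K : ℕ, fibreComp f ρ (K + 1) '' A

/-- `A` is strongly fibred: every open set meeting `A` contains a fibre. -/
def StronglyFibred (f : Λ → X → X) (A : Set X) : Prop :=
  ∀ U : Set X, IsOpen U → (U ∩ A).Nonempty → ∃ ρ : ℕ → Λ, fibre f A ρ ⊆ U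

open Topology

section HausdorffConvergence

variable {α β : Type*} [PseudoEMetricSpace α] {l : Filter β} {B : β → Set α} {A : Set α}

theorem eventually_inter_nonempty_of_tendsto_hausdorffEDist
    (h : Tendsto (fun i => hausdorffEDist (B i) A) l (𝓝 0)) {x : α} (hx : x ∈ A) {V : Set α}
    (hV : V ∈ 𝓝 x) : ∀ᶠ i in l, (B i ∩ V).Nonempty := by
  obtain ⟨ε, hε, hεV⟩ := EMetric.mem_nhds_iff.1 hV
  filter_upwards [h.eventually (gt_mem_nhds hε)] with i hi
  obtain ⟨y, hy, hxy⟩ := exists_edist_lt_of_hausdorffEDist_lt hx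
    (by rwa [hausdorffEDist_comm] at hi)
  exact ⟨y, hy, hεV (Metric.mem_eball'.2 hxy)⟩

theorem mem_closure_of_tendsto_hausdorffEDist
    (h : Tendsto (fun i => hausdorffEDist (B i) A) l (𝓝 0)) {z : α}
    (hz : ∀ V ∈ 𝓝 z, ∃ᶠ i in l, (B i ∩ V).Nonempty) : z ∈ closure A := by
  refine EMetric.mem_closure_iff.2 fun ε hε => ?_
  have hε2 : 0 < ε / 2 := ENNReal.half_pos hε.ne'
  obtain ⟨i, ⟨w, hwB, hwz⟩, hi⟩ := ((hz _ (Metric.eball_mem_nhds z hε2)).and_eventually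
    (h.eventually (gt_mem_nhds hε2))).exists
  obtain ⟨y, hyA, hwy⟩ := exists_edist_lt_of_hausdorffEDist_lt hwB hi
  refine ⟨y, hyA, ?_⟩
  calc edist z y ≤ edist z w + edist w y := edist_triangle z w y
    _ < ε / 2 + ε / 2 := ENNReal.add_lt_add (Metric.mem_eball'.1 hwz) hwy
    _ = ε := ENNReal.add_halves ε

theorem tendsto_infEDist_of_tendsto_hausdorffEDist
    (h : Tendsto (fun i => hausdorffEDist (B i) A) l (𝓝 0)) {u : β → α} (hu : ∀ i, u i ∈ B i) :
    Tendsto (fun i => infEDist (u i) A) l (𝓝 0) :=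
  tendsto_of_tendsto_of_tendsto_of_le_of_le tendsto_const_nhds h (fun _ => zero_le)
    fun i => infEDist_le_hausdorffEDist_of_mem (hu i)

theorem tendsto_nhdsSet_of_tendsto_infEDist (hA : IsCompact A) {u : β → α}
    (hu : Tendsto (fun i => infEDist (u i) A) l (𝓝 0)) : Tendsto u l (𝓝ˢ A) :=
  (hasBasis_nhdsSet_thickening hA).tendsto_right_iff.2 fun δ hδ => by
    filter_upwards [hu.eventually (gt_mem_nhds (ENNReal.ofReal_pos.2 hδ))] with i hi
    exact mem_thickening_iff_infEDist_lt.2 hi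

end HausdorffConvergence

section Tails

variable {α : Type*} [PseudoEMetricSpace α] {u : ℕ → α} {A : Set α}

theorem tendsto_hausdorffEDist_closure_image_Ici
    (hu : Tendsto (fun k => infEDist (u k) A) atTop (𝓝 0))
    (hA : ∀ p, A ⊆ closure (u '' Ici p)) :
    Tendsto (fun p => hausdorffEDist (closure (u '' Ici p)) A) atTop (𝓝 0) := by
  refine ENNReal.tendsto_nhds_zero.2 fun ε hε => ?_
  obtain ⟨N, hN⟩ := eventually_atTop.1 (hu.eventually (ge_mem_nhds hε))
  filter_upwards [eventually_ge_atTop N] with p hp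
  rw [hausdorffEDist_closure_left]
  refine hausdorffEDist_le_of_infEDist ?_ fun a ha => ?_
  · rintro - ⟨k, hk, rfl⟩
    exact hN k (hp.trans hk)
  · rw [← infEDist_closure, infEDist_zero_of_mem (hA p ha)]
    exact zero_le

theorem iInter_closure_image_Ici_eq (hAc : IsClosed A)
    (hu : Tendsto (fun k => infEDist (u k) A) atTop (𝓝 0))
    (hA : ∀ p, A ⊆ closure (u '' Ici p)) : ⋂ p, closure (u '' Ici p) = A := by
  refine (Subset.antisymm (fun z hz => ?_) (subset_iInter hA))
  rw [← hAc.closure_eq]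
  refine mem_closure_of_tendsto_hausdorffEDist (tendsto_hausdorffEDist_closure_image_Ici hu hA)
    fun V hV => Frequently.of_forall fun p => ⟨z, mem_iInter.1 hz p, mem_of_mem_nhds hV⟩

end Tails

section IFS

variable {α ι : Type*} {f : ι → α → α}

theorem orbit_mem_iterate_hutch (σ : ℕ → ι) (x₀ : α) (k : ℕ) :
    orbit f σ x₀ k ∈ (Hutch f)^[k] {x₀} := by
  induction k with
  | zero => exact rfl
  | succ k ih =>
    rw [Function.iterate_succ_apply']
    exact mem_iUnion.2 ⟨σ k, mem_image_of_mem _ ih⟩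

theorem hutch_iterate_nonempty [Nonempty ι] {B : Set α} (hB : B.Nonempty) (k : ℕ) :
    ((Hutch f)^[k] B).Nonempty := by
  induction k with
  | zero => exact hB
  | succ k ih =>
    rw [Function.iterate_succ_apply']
    exact nonempty_iUnion.2 ⟨Classical.arbitrary ι, ih.image _⟩

theorem isCompact_hutch_iterate [TopologicalSpace α] [Finite ι] (hf : ∀ a, Continuous (f a)) {B : Set α} (hB : IsCompact B) (k : ℕ) :
    IsCompact ((Hutch f)^[k] B) := by
  induction k with
  | zero => exact hB
  | succ k ih =>
    rw [Function.iterate_succ_apply']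
    exact isCompact_iUnion fun a => ih.image (hf a)

theorem continuous_fibreComp [TopologicalSpace α] (hf : ∀ a, Continuous (f a)) (ρ : ℕ → ι) (K : ℕ) : Continuous (fibreComp f ρ K) := by
  induction K with
  | zero => exact continuous_id
  | succ K ih => exact ih.comp (hf _)

theorem orbit_add_eq_fibreComp {σ ρ : ℕ → ι} {x₀ : α} {K j : ℕ}
    (h : ∀ i < K, σ (j + i) = ρ (K - 1 - i)) :
    orbit f σ x₀ (j + K) = fibreComp f ρ K (orbit f σ x₀ j) := by
  induction K generalizing j with
  | zero => rfl
  | succ K ih =>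
    have hj : σ j = ρ K := by simpa using h 0 K.succ_pos
    have hshift : ∀ i < K, σ (j + 1 + i) = ρ (K - 1 - i) := fun i hi => by
      rw [add_assoc, add_comm 1 i, h (i + 1) (by omega)]
      congr 1
      omega
    rw [← add_assoc, add_right_comm, ih hshift]
    simp only [orbit, fibreComp, Function.comp_apply, hj]

theorem antitone_fibreComp_image {A : Set α} (hA : ∀ a, MapsTo (f a) A A) (ρ : ℕ → ι) :
    Antitone fun K => fibreComp f ρ K '' A :=
  antitone_nat_of_succ_le fun K => by
    simp only [fibreComp, image_comp]
    exact image_mono (hA (ρ K)).image_subset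

theorem exists_fibreComp_image_subset [TopologicalSpace α] [T2Space α]
    (hf : ∀ a, Continuous (f a)) {A : Set α} (hA : IsCompact A) (hinv : ∀ a, MapsTo (f a) A A)
    {ρ : ℕ → ι} {V : Set α} (hV : IsOpen V) (hρ : fibre f A ρ ⊆ V) :
    ∃ K, fibreComp f ρ K '' A ⊆ V := by
  obtain ⟨K, hK⟩ := exists_subset_nhds_of_isCompact (V := fun K => fibreComp f ρ (K + 1) '' A)
    ((antitone_fibreComp_image hinv ρ).comp_monotone fun _ _ h => Nat.succ_le_succ h).directed_ge
    (fun K => hA.image (continuous_fibreComp hf ρ _)) fun _ hx => hV.mem_nhds (hρ hx)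
  exact ⟨K + 1, hK⟩

end IFS

theorem Disjunctive.exists_ge {Γ : Type*} {σ : ℕ → Γ} (hσ : Disjunctive σ) (w : ℕ → Γ)
    (m P : ℕ) : ∃ j ≥ P, ∀ i < m, σ (j + i) = w i := by
  obtain ⟨j, hj⟩ := hσ (P + m) fun l => w (l - P)
  refine ⟨j + P, le_add_self, fun i hi => ?_⟩
  simpa [add_assoc] using hj ⟨P + i, by omega⟩

section Attractor

variable {α ι : Type*} [MetricSpace α] {f : ι → α → α} {A U : Set α}

theorem Attracts.tendsto_hausdorffEDist [Finite ι] [Nonempty ι] (hf : ∀ a, Continuous (f a))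
    (hA : IsCompact A) (hA₀ : A.Nonempty) (h : Attracts f A U) {B : Set α} (hB : IsCompact B)
    (hB₀ : B.Nonempty) (hBU : B ⊆ U) :
    Tendsto (fun k => hausdorffEDist ((Hutch f)^[k] B) A) atTop (𝓝 0) := by
  have hfin : ∀ k, hausdorffEDist ((Hutch f)^[k] B) A ≠ ⊤ := fun k =>
    hausdorffEDist_ne_top_of_nonempty_of_bounded (hutch_iterate_nonempty hB₀ k) hA₀
      (isCompact_hutch_iterate hf hB k).isBounded hA.isBounded
  rw [← ENNReal.tendsto_toReal_iff hfin ENNReal.zero_ne_top]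
  exact h B hB₀ hB hBU

theorem Attracts.mapsTo [Finite ι] [Nonempty ι] (hf : ∀ a, Continuous (f a)) (hA : IsCompact A)
    (hA₀ : A.Nonempty) (h : Attracts f A U) (hAU : A ⊆ U) (a : ι) : MapsTo (f a) A A := by
  intro x hx
  have hconv := h.tendsto_hausdorffEDist hf hA hA₀ hA hA₀ hAU
  -- points of `F^k(A)` near `x` are mapped by `f a` to points of `F^(k+1)(A)` near `f a x`
  rw [← hA.isClosed.closure_eq]
  refine mem_closure_of_tendsto_hausdorffEDist hconv fun V hV => ?_
  refine (tendsto_add_atTop_nat 1).frequently (Eventually.frequently ?_)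
  filter_upwards [eventually_inter_nonempty_of_tendsto_hausdorffEDist hconv hx
    ((hf a).continuousAt.preimage_mem_nhds hV)] with k ⟨y, hy, hyV⟩
  rw [Function.iterate_succ_apply']
  exact ⟨f a y, mem_iUnion.2 ⟨a, mem_image_of_mem _ hy⟩, hyV⟩

theorem subset_tailSet (hf : ∀ a, Continuous (f a)) (hA : IsCompact A)
    (hinv : ∀ a, MapsTo (f a) A A) (hsf : StronglyFibred f A) {σ : ℕ → ι} (hσ : Disjunctive σ)
    {x₀ : α} (horbit : Tendsto (orbit f σ x₀) atTop (𝓝ˢ A)) (p : ℕ) : A ⊆ tailSet f σ x₀ p := by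
  refine fun a ha => mem_closure_iff.2 fun V hV haV => ?_
  obtain ⟨ρ, hρ⟩ := hsf V hV ⟨a, haV, ha⟩
  obtain ⟨K, hK⟩ := exists_fibreComp_image_subset hf hA hinv hV hρ
  obtain ⟨N, hN⟩ := eventually_atTop.1 <| horbit <|
    ((hV.preimage (continuous_fibreComp hf ρ K)).mem_nhdsSet).2 (image_subset_iff.1 hK)
  obtain ⟨j, hj, hblock⟩ := hσ.exists_ge (fun i => ρ (K - 1 - i)) K (max N p)
  refine ⟨orbit f σ x₀ (j + K), ?_, j + K, by omega, rfl⟩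
  rw [orbit_add_eq_fibreComp hblock]
  exact hN j (le_of_max_le_left hj)

theorem tendsto_hausdorffDist_tailSet_and_eq_iInter [Finite ι] [Nonempty ι]
    (hf : ∀ a, Continuous (f a)) (hA : IsAttractor f A) (hsf : StronglyFibred f A) {x₀ : α}
    (hx₀ : x₀ ∈ basin f A) {σ : ℕ → ι} (hσ : Disjunctive σ) :
    Tendsto (fun p => hausdorffDist (tailSet f σ x₀ p) A) atTop (𝓝 0) ∧
      A = ⋂ p, tailSet f σ x₀ p := by
  obtain ⟨hA₀, hA, -⟩ := hA
  obtain ⟨U, ⟨-, hAU, hattr⟩, hx₀U⟩ := hx₀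
  have horbit : Tendsto (fun k => infEDist (orbit f σ x₀ k) A) atTop (𝓝 0) :=
    tendsto_infEDist_of_tendsto_hausdorffEDist (hattr.tendsto_hausdorffEDist hf hA hA₀
      isCompact_singleton (singleton_nonempty x₀) (singleton_subset_iff.2 hx₀U))
      (orbit_mem_iterate_hutch σ x₀)
  have hsub : ∀ p, A ⊆ tailSet f σ x₀ p := subset_tailSet hf hA (hattr.mapsTo hf hA hA₀ hAU) hsf
    hσ (tendsto_nhdsSet_of_tendsto_infEDist hA horbit)
  exact ⟨(ENNReal.tendsto_toReal ENNReal.zero_ne_top).comp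
    (tendsto_hausdorffEDist_closure_image_Ici horbit hsub),
    (iInter_closure_image_Ici_eq hA.isClosed horbit hsub).symm⟩

end Attractor

theorem ae_disjunctive {S Γ : Type*} [MeasurableSpace S] {μ : Measure S} [IsProbabilityMeasure μ]
    [MeasurableSpace Γ] [MeasurableSingletonClass Γ] [Countable Γ] {Z : ℕ → S → Γ}
    (hZ : ∀ n, Measurable (Z n))
    (h : ∀ (m : ℕ) (τ : Fin m → Γ), μ {s | ∃ n : ℕ, ∀ l : Fin m, Z (n + l.1) s = τ l} = 1) :
    ∀ᵐ s ∂μ, Disjunctive fun n => Z n s := by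
  have hword : ∀ w : Σ m, Fin m → Γ, ∀ᵐ s ∂μ, ∃ n : ℕ, ∀ l : Fin w.1, Z (n + l.1) s = w.2 l :=
    fun ⟨m, τ⟩ => (ae_iff_prob_eq_one (Measurable.exists fun n => Measurable.forall fun l =>
      measurableSet_setOfPred.1 (hZ _ (measurableSet_singleton (τ l))))).2 (h m τ)
  filter_upwards [ae_all_iff.2 hword] with s hs m τ using hs ⟨m, τ⟩

/-- Theorem "stochaosgame": if `A` is a strongly-fibred attractor,
`x₀` lies in its basin, and the driving stochastic process is disjunctive, then with
probability 1 the tails of the random orbit converge to `A` in the Hausdorff metric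
and `A = ⋂_p closure {x_n : n ≥ p}`. -/
theorem stochastic_chaosGame_yields_attractor
    (f : Λ → X → X) (hf : ∀ a : Λ, Continuous (f a))
    (A : Set X) (hA : IsAttractor f A) (hsf : StronglyFibred f A)
    (x₀ : X) (hx₀ : x₀ ∈ basin f A)
    {S : Type*} [MeasurableSpace S] (Pr : Measure S) [IsProbabilityMeasure Pr]
    [MeasurableSpace Λ] [MeasurableSingletonClass Λ]
    (Z : ℕ → S → Λ) (hZ : ∀ n : ℕ, Measurable (Z n))
    (hdisj : ∀ (m : ℕ) (τ : Fin m → Λ),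
      Pr {s : S | ∃ n : ℕ, ∀ l : Fin m, Z (n + l.1) s = τ l} = 1) :
    Pr {s : S |
        Tendsto (fun p : ℕ => hausdorffDist (tailSet f (fun n => Z n s) x₀ p) A)
          atTop (nhds 0) ∧
        A = ⋂ p : ℕ, tailSet f (fun n => Z n s) x₀ p} = 1 := by
  have hae := (ae_disjunctive hZ hdisj).mono fun s hs =>
    tendsto_hausdorffDist_tailSet_and_eq_iInter hf hA hsf hx₀ hs
  exact (measure_congr (eventuallyEq_univ.2 hae)).trans measure_univ
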